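/- arXiv:1302.5815 — 3 statements merged into one kernel-verified Lean document; each statement's English description precedes it below -/
import Mathlib

section
/- For every natural number n, the set partitions into lists of {1,…,n} (set partitions where each block is equipped with a linear order) are in bijection with pairs (σ, π) where σ is a permutation of {1,…,n} and π is a set partition of {1,…,n} that is coarser than or equal to the cycle support of σ (i.e., each block of π is a union of orbits of σ). -/
/-- A finite set `L` of lists of `Fin n` is a *set partition into lists* of `{1,…,n}`:
its elements are nonempty duplicate-free lists, pairwise disjoint,
and every element of `Fin n` occurs in some list. -/
def IsSPL (n : ℕ) (L : Finset (List (Fin n))) : Prop :=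
  (∀ l ∈ L, l ≠ [] ∧ l.Nodup) ∧
  (∀ l ∈ L, ∀ l' ∈ L, l ≠ l' → ∀ x, x ∈ l → x ∉ l') ∧
  (∀ x : Fin n, ∃ l ∈ L, x ∈ l)


namespace SPLAux

variable {n : ℕ}

/-- Canonical sorted version of a list of `Fin n`; depends only on the member set. -/
def sortedOf (l : List (Fin n)) : List (Fin n) := l.toFinset.sort (· ≤ ·)

lemma sortedOf_perm {l : List (Fin n)} (hl : l.Nodup) : (sortedOf l).Perm l :=
  (Finset.sort_perm_toList _ _).trans (List.toFinset_toList hl)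

lemma sortedOf_nodup (l : List (Fin n)) : (sortedOf l).Nodup := Finset.sort_nodup _ _

lemma mem_sortedOf {l : List (Fin n)} {x : Fin n} : x ∈ sortedOf l ↔ x ∈ l := by
  simp [sortedOf]

lemma length_sortedOf {l : List (Fin n)} (hl : l.Nodup) : (sortedOf l).length = l.length :=
  (sortedOf_perm hl).length_eq

/-- `stepF l` sends the `i`-th smallest member of `l` to the `i`-th entry of `l`. -/
def stepF (l : List (Fin n)) (x : Fin n) : Fin n :=
  if h : (sortedOf l).idxOf x < l.length then l.get ⟨_, h⟩ else x

lemma stepF_eq {l : List (Fin n)} (hl : l.Nodup) {x : Fin n} (hx : x ∈ l) :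
    ∃ h : (sortedOf l).idxOf x < l.length, stepF l x = l.get ⟨_, h⟩ := by
  have h : (sortedOf l).idxOf x < l.length := by
    rw [← length_sortedOf hl]
    exact List.idxOf_lt_length_iff.2 (mem_sortedOf.2 hx)
  exact ⟨h, dif_pos h⟩

lemma stepF_mem {l : List (Fin n)} (hl : l.Nodup) {x : Fin n} (hx : x ∈ l) :
    stepF l x ∈ l := by
  obtain ⟨h, he⟩ := stepF_eq hl hx
  rw [he]; exact l.get_mem _

lemma stepF_inj {l : List (Fin n)} (hl : l.Nodup) {x y : Fin n} (hx : x ∈ l) (hy : y ∈ l)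
    (h : stepF l x = stepF l y) : x = y := by
  obtain ⟨h1, e1⟩ := stepF_eq hl hx
  obtain ⟨h2, e2⟩ := stepF_eq hl hy
  rw [e1, e2] at h
  have hidx : (sortedOf l).idxOf x = (sortedOf l).idxOf y := by
    have := (List.Nodup.get_inj_iff hl).1 h
    exact congrArg Fin.val this
  have hx' : (sortedOf l).idxOf x < (sortedOf l).length :=
    List.idxOf_lt_length_iff.2 (mem_sortedOf.2 hx)
  have hy' : (sortedOf l).idxOf y < (sortedOf l).length :=
    List.idxOf_lt_length_iff.2 (mem_sortedOf.2 hy)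
  have ex : (sortedOf l).get ⟨_, hx'⟩ = x := List.idxOf_get hx'
  have ey : (sortedOf l).get ⟨_, hy'⟩ = y := List.idxOf_get hy'
  rw [← ex, ← ey]
  congr 1
  exact Fin.ext hidx

lemma map_stepF_sortedOf {l : List (Fin n)} (hl : l.Nodup) :
    (sortedOf l).map (stepF l) = l := by
  apply List.ext_get
  · simp [length_sortedOf hl]
  · intro i h1 h2
    simp only [List.get_eq_getElem, List.getElem_map]
    show stepF l ((sortedOf l).get ⟨i, by simpa using h1⟩) = l.get ⟨i, h2⟩
    set x := (sortedOf l).get ⟨i, by simpa using h1⟩ with hx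
    have hxm : x ∈ l := mem_sortedOf.1 ((sortedOf l).get_mem _)
    obtain ⟨h, he⟩ := stepF_eq hl hxm
    rw [he]
    congr 1
    apply Fin.ext
    simp only []
    rw [hx]
    simp [List.get_eq_getElem]
    exact List.Nodup.idxOf_getElem (sortedOf_nodup l) i _


lemma stepF_map {s : List (Fin n)} (σ : Equiv.Perm (Fin n)) (hs : s.Nodup)
    (hsort : sortedOf (s.map σ) = s) {x : Fin n} (hx : x ∈ s) :
    stepF (s.map σ) x = σ x := by
  have hnd : (s.map ⇑σ).Nodup := hs.map σ.injective
  have hxm : x ∈ s.map ⇑σ := mem_sortedOf.1 (by rw [hsort]; exact hx)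
  obtain ⟨h, he⟩ := stepF_eq hnd hxm
  rw [he]
  have hlt : s.idxOf x < s.length := List.idxOf_lt_length_iff.2 hx
  have hidx : (sortedOf (s.map ⇑σ)).idxOf x = s.idxOf x := by rw [hsort]
  simp only [List.get_eq_getElem]
  simp only [hidx]
  rw [List.getElem_map]
  rw [List.getElem_idxOf hlt]

/-! ### Forward direction -/


section Forward

variable {L : Finset (List (Fin n))} (hL : IsSPL n L)

noncomputable def theList (x : Fin n) : List (Fin n) := (hL.2.2 x).choose

lemma theList_mem (x : Fin n) : theList hL x ∈ L := (hL.2.2 x).choose_spec.1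

lemma mem_theList (x : Fin n) : x ∈ theList hL x := (hL.2.2 x).choose_spec.2

lemma theList_nodup (x : Fin n) : (theList hL x).Nodup :=
  (hL.1 _ (theList_mem hL x)).2

lemma theList_eq {l : List (Fin n)} (hl : l ∈ L) {x : Fin n} (hx : x ∈ l) :
    theList hL x = l := by
  by_contra hne
  exact hL.2.1 _ hl _ (theList_mem hL x) (Ne.symm hne) x hx (mem_theList hL x)

noncomputable def sigmaFun (x : Fin n) : Fin n := stepF (theList hL x) x

lemma sigmaFun_mem (x : Fin n) : sigmaFun hL x ∈ theList hL x :=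
  stepF_mem (theList_nodup hL x) (mem_theList hL x)

lemma sigmaFun_inj : Function.Injective (sigmaFun hL) := by
  intro x y h
  have hxy : theList hL x = theList hL y := by
    have h1 : sigmaFun hL x ∈ theList hL x := sigmaFun_mem hL x
    have h2 : sigmaFun hL x ∈ theList hL y := h ▸ sigmaFun_mem hL y
    rw [← theList_eq hL (theList_mem hL x) h1, theList_eq hL (theList_mem hL y) h2]
  unfold sigmaFun at h
  rw [hxy] at h
  exact stepF_inj (theList_nodup hL y) (hxy ▸ mem_theList hL x) (mem_theList hL y) h

noncomputable def sigmaPerm : Equiv.Perm (Fin n) :=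
  Equiv.ofBijective (sigmaFun hL) (Finite.injective_iff_bijective.1 (sigmaFun_inj hL))

lemma sigmaPerm_apply (x : Fin n) : sigmaPerm hL x = sigmaFun hL x := rfl

def piSetoid : Setoid (Fin n) where
  r x y := ∃ l ∈ L, x ∈ l ∧ y ∈ l
  iseqv := by
    refine ⟨fun x => ⟨theList hL x, theList_mem hL x, mem_theList hL x, mem_theList hL x⟩,
      ?_, ?_⟩
    · rintro x y ⟨l, hl, hx, hy⟩; exact ⟨l, hl, hy, hx⟩
    · rintro x y z ⟨l, hl, hx, hy⟩ ⟨l', hl', hy', hz⟩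
      have : theList hL y = l := theList_eq hL hl hy
      have h2 : theList hL y = l' := theList_eq hL hl' hy'
      exact ⟨l, hl, hx, by rw [← this, h2]; exact hz⟩

lemma piSetoid_r_iff {x y : Fin n} : (piSetoid hL).r x y ↔ y ∈ theList hL x := by
  constructor
  · rintro ⟨l, hl, hx, hy⟩
    rw [theList_eq hL hl hx]; exact hy
  · intro h
    exact ⟨theList hL x, theList_mem hL x, mem_theList hL x, h⟩

lemma r_sigmaPerm (x : Fin n) : (piSetoid hL).r x (sigmaPerm hL x) :=
  (piSetoid_r_iff hL).2 (sigmaFun_mem hL x)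

lemma coarser : ∀ i j : Fin n, (sigmaPerm hL).SameCycle i j → (piSetoid hL).r i j := by
  have key : ∀ (k : ℕ) (i : Fin n), (piSetoid hL).r i ((sigmaPerm hL ^ k) i) := by
    intro k
    induction k with
    | zero => intro i; simpa using (piSetoid hL).refl i
    | succ k ih =>
      intro i
      have h1 : (piSetoid hL).r i (sigmaPerm hL i) := r_sigmaPerm hL i
      have h2 := ih (sigmaPerm hL i)
      have he : (sigmaPerm hL ^ (k + 1)) i = (sigmaPerm hL ^ k) (sigmaPerm hL i) := by
        rw [pow_succ]
        simp [Equiv.Perm.mul_apply]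
      rw [he]
      exact (piSetoid hL).trans h1 h2
  intro i j h
  obtain ⟨k, -, hk⟩ := h.exists_pow_eq'
  rw [← hk]
  exact key k i

end Forward


/-! ### Backward direction -/

section Backward

noncomputable def block (π : Setoid (Fin n)) (x : Fin n) : Finset (Fin n) :=
  @Finset.filter _ (fun y => π.r x y) (Classical.decPred _) Finset.univ

lemma mem_block {π : Setoid (Fin n)} {x y : Fin n} : y ∈ block π x ↔ π.r x y := by
  simp [block]

lemma block_eq_of_r {π : Setoid (Fin n)} {x y : Fin n} (h : π.r x y) :
    block π x = block π y := by
  ext z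
  simp only [mem_block]
  exact ⟨fun hz => π.trans (π.symm h) hz, fun hz => π.trans h hz⟩

variable (σ : Equiv.Perm (Fin n)) (π : Setoid (Fin n))

noncomputable def blockList (x : Fin n) : List (Fin n) :=
  ((block π x).sort (· ≤ ·)).map σ

variable (hc : ∀ i j : Fin n, σ.SameCycle i j → π.r i j)

include hc in
lemma r_apply (x : Fin n) : π.r x (σ x) := hc x (σ x) ⟨1, by simp⟩

include hc in
lemma r_inv_apply (x : Fin n) : π.r (σ⁻¹ x) x := hc _ x ⟨1, by simp⟩

include hc in
lemma mem_blockList {x y : Fin n} : y ∈ blockList σ π x ↔ π.r x y := by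
  simp only [blockList, List.mem_map, Finset.mem_sort, mem_block]
  constructor
  · rintro ⟨z, hz, rfl⟩
    exact π.trans hz (r_apply σ π hc z)
  · intro h
    refine ⟨σ⁻¹ y, π.trans h (π.symm (r_inv_apply σ π hc y)), by simp⟩

lemma blockList_nodup (x : Fin n) : (blockList σ π x).Nodup :=
  ((block π x).sort_nodup _).map σ.injective

include hc in
lemma self_mem_blockList (x : Fin n) : x ∈ blockList σ π x :=
  (mem_blockList σ π hc).2 (π.refl x)

include hc in
lemma blockList_ne_nil (x : Fin n) : blockList σ π x ≠ [] :=
  List.ne_nil_of_mem (self_mem_blockList σ π hc x)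

lemma blockList_eq_of_r {x y : Fin n} (h : π.r x y) :
    blockList σ π x = blockList σ π y := by
  unfold blockList
  rw [block_eq_of_r h]

include hc in
lemma toFinset_blockList (x : Fin n) : (blockList σ π x).toFinset = block π x := by
  ext y
  rw [List.mem_toFinset, mem_blockList σ π hc, mem_block]

noncomputable def backSet : Finset (List (Fin n)) :=
  Finset.image (fun x => blockList σ π x) Finset.univ

include hc in
lemma isSPL_backSet : IsSPL n (backSet σ π) := by
  refine ⟨?_, ?_, ?_⟩
  · intro l hl
    obtain ⟨x, -, rfl⟩ := Finset.mem_image.1 hl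
    exact ⟨blockList_ne_nil σ π hc x, blockList_nodup σ π x⟩
  · intro l hl l' hl' hne z hz
    obtain ⟨x, -, rfl⟩ := Finset.mem_image.1 hl
    obtain ⟨y, -, rfl⟩ := Finset.mem_image.1 hl'
    intro hz'
    apply hne
    have hx : π.r x z := (mem_blockList σ π hc).1 hz
    have hy : π.r y z := (mem_blockList σ π hc).1 hz'
    exact blockList_eq_of_r σ π (π.trans hx (π.symm hy))
  · intro x
    exact ⟨blockList σ π x, Finset.mem_image.2 ⟨x, Finset.mem_univ x, rfl⟩,
      self_mem_blockList σ π hc x⟩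

end Backward


/-! ### Round trips -/

section RoundTrips

lemma blockList_sigma {L : Finset (List (Fin n))} (hL : IsSPL n L) (x : Fin n) :
    blockList (sigmaPerm hL) (piSetoid hL) x = theList hL x := by
  have hb : block (piSetoid hL) x = (theList hL x).toFinset := by
    ext y
    rw [mem_block, piSetoid_r_iff hL, List.mem_toFinset]
  unfold blockList
  rw [hb]
  have hsort : (theList hL x).toFinset.sort (· ≤ ·) = sortedOf (theList hL x) := rfl
  rw [hsort]
  rw [List.map_congr_left (g := stepF (theList hL x)) ?_]
  · exact map_stepF_sortedOf (theList_nodup hL x)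
  · intro z hz
    have hzl : z ∈ theList hL x := mem_sortedOf.1 hz
    show sigmaFun hL z = stepF (theList hL x) z
    unfold sigmaFun
    rw [theList_eq hL (theList_mem hL x) hzl]

lemma backSet_sigma {L : Finset (List (Fin n))} (hL : IsSPL n L) :
    backSet (sigmaPerm hL) (piSetoid hL) = L := by
  ext l
  rw [backSet, Finset.mem_image]
  constructor
  · rintro ⟨x, -, rfl⟩
    rw [blockList_sigma hL x]
    exact theList_mem hL x
  · intro hl
    obtain ⟨x, hx⟩ := List.exists_mem_of_ne_nil l (hL.1 l hl).1
    exact ⟨x, Finset.mem_univ x, by rw [blockList_sigma hL x, theList_eq hL hl hx]⟩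

variable (σ : Equiv.Perm (Fin n)) (π : Setoid (Fin n))
  (hc : ∀ i j : Fin n, σ.SameCycle i j → π.r i j)

include hc in
lemma piSetoid_back : piSetoid (isSPL_backSet σ π hc) = π := by
  apply Setoid.ext
  intro a b
  constructor
  · rintro ⟨l, hl, ha, hb⟩
    obtain ⟨z, -, rfl⟩ := Finset.mem_image.1 hl
    exact π.trans (π.symm ((mem_blockList σ π hc).1 ha)) ((mem_blockList σ π hc).1 hb)
  · intro h
    exact ⟨blockList σ π a, Finset.mem_image.2 ⟨a, Finset.mem_univ a, rfl⟩,
      self_mem_blockList σ π hc a, (mem_blockList σ π hc).2 h⟩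

include hc in
lemma sigmaPerm_back : sigmaPerm (isSPL_backSet σ π hc) = σ := by
  apply Equiv.ext
  intro x
  rw [sigmaPerm_apply]
  have h1 : theList (isSPL_backSet σ π hc) x = blockList σ π x := by
    have hm : blockList σ π x ∈ backSet σ π :=
      Finset.mem_image.2 ⟨x, Finset.mem_univ x, rfl⟩
    exact theList_eq _ hm (self_mem_blockList σ π hc x)
  show stepF (theList (isSPL_backSet σ π hc) x) x = σ x
  rw [h1]
  have hxs : x ∈ (block π x).sort (· ≤ ·) :=
    (Finset.mem_sort _).2 (mem_block.2 (π.refl x))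
  have hsort : sortedOf (((block π x).sort (· ≤ ·)).map σ) = (block π x).sort (· ≤ ·) := by
    show (((block π x).sort (· ≤ ·)).map ⇑σ).toFinset.sort (· ≤ ·) = _
    rw [show (((block π x).sort (· ≤ ·)).map ⇑σ).toFinset = block π x from
      toFinset_blockList σ π hc x]
  exact stepF_map σ ((block π x).sort_nodup _) hsort hxs

end RoundTrips

end SPLAux

/-- Set partitions into lists of `{1,…,n}` are in bijection with pairs `(σ, π)` where
`σ` is a permutation of `{1,…,n}` and `π` is a set partition (equivalence relation)
coarser than or equal to the cycle support of `σ`. -/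
theorem spl_equiv_perm_coarser_partition (n : ℕ) :
    Nonempty ({L : Finset (List (Fin n)) // IsSPL n L} ≃
      {p : Equiv.Perm (Fin n) × Setoid (Fin n) //
        ∀ i j : Fin n, p.1.SameCycle i j → p.2.r i j}) := by
  refine ⟨{
    toFun := fun L => ⟨(SPLAux.sigmaPerm L.2, SPLAux.piSetoid L.2), SPLAux.coarser L.2⟩
    invFun := fun p => ⟨SPLAux.backSet p.1.1 p.1.2, SPLAux.isSPL_backSet p.1.1 p.1.2 p.2⟩
    left_inv := ?_
    right_inv := ?_ }⟩
  · rintro ⟨L, hL⟩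
    exact Subtype.ext (SPLAux.backSet_sigma hL)
  · rintro ⟨⟨σ, π⟩, hc⟩
    exact Subtype.ext (Prod.ext (SPLAux.sigmaPerm_back σ π hc) (SPLAux.piSetoid_back σ π hc))
end

section
/- For a pair (τ, σ) ∈ S_m × S_n and a word w : {1,…,n} → {1,…,m}, the word w satisfies τ∘w∘σ = w if and only if for every cycle c of σ of length ℓ acting on positions, the restriction of w to c visits letters lying in a single cycle d of τ whose length k divides ℓ, with consecutive positions along c mapped by w to consecutive letters along d. -/
/-- Fixed points of the Harary–Palmer product action: for `τ ∈ S_m`, `σ ∈ S_n` and a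
word `w : Fin n → Fin m`, one has `τ∘w∘σ = w` if and only if, for every position `i`,
the length of the `τ`-cycle through the letter `w i` divides the length of the
`σ`-cycle through `i`, and consecutive positions along the `σ`-cycle are mapped by
`w` to consecutive letters along the corresponding `τ`-cycle. -/
theorem harary_palmer_fixed_points {m n : ℕ}
    (τ : Equiv.Perm (Fin m)) (σ : Equiv.Perm (Fin n)) (w : Fin n → Fin m) :
    ⇑τ ∘ w ∘ ⇑σ = w ↔
      ∀ i : Fin n,
        Function.minimalPeriod ⇑τ (w i) ∣ Function.minimalPeriod ⇑σ i ∧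
        ∀ t : ℕ, w ((σ ^ t) i) = ((τ⁻¹ ^ t) (w i)) := by
  constructor
  · intro h i
    have key : ∀ j : Fin n, w (σ j) = τ⁻¹ (w j) := by
      intro j
      have := congrFun h j
      simp only [Function.comp_apply] at this
      rw [← this]
      simp
    have ht : ∀ (t : ℕ) (j : Fin n), w ((σ ^ t) j) = ((τ⁻¹ ^ t) (w j)) := by
      intro t
      induction t with
      | zero => simp
      | succ t ih =>
        intro j
        rw [pow_succ', pow_succ']
        simp only [Equiv.Perm.mul_apply]
        rw [key ((σ ^ t) j), ih j]
    refine ⟨?_, fun t => ht t i⟩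
    set p := Function.minimalPeriod ⇑σ i with hp
    have hper : (σ ^ p) i = i := by
      have : Function.IsPeriodicPt ⇑σ p i :=
        Function.isPeriodicPt_minimalPeriod ⇑σ i
      simpa [Function.IsPeriodicPt, Function.IsFixedPt,
        Equiv.Perm.iterate_eq_pow] using this
    have h1 : ((τ⁻¹ ^ p) (w i)) = w i := by rw [← ht p i, hper]
    have h2 : (τ ^ p) (w i) = w i := by
      rw [inv_pow] at h1
      conv_lhs => rw [← h1]
      exact Equiv.apply_symm_apply _ _
    have : Function.IsPeriodicPt ⇑τ p (w i) := by
      simpa [Function.IsPeriodicPt, Function.IsFixedPt,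
        Equiv.Perm.iterate_eq_pow] using h2
    exact Function.IsPeriodicPt.minimalPeriod_dvd this
  · intro h
    funext j
    have := (h j).2 1
    simp only [pow_one] at this
    simp [this]
end

section
/- In the algebra BWSym with basis Φ^Π indexed by set partitions into lists, the coproduct Δ(Φ^Π) = ∑ Φ^{std(Π′)} ⊗ Φ^{std(Π″)}, summed over ordered pairs of complementary subsets Π′ ⊔ Π″ = Π of the set of lists of Π, is coassociative and cocommutative. -/
/-- A finite set `L` of lists of positive integers is a set partition into lists of
`{1,…,n}`. -/
def IsSPLn (n : ℕ) (L : Finset (List ℕ)) : Prop :=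
  (∀ l ∈ L, l ≠ [] ∧ l.Nodup) ∧
  (∀ l ∈ L, ∀ l' ∈ L, l ≠ l' → ∀ x, x ∈ l → x ∉ l') ∧
  (∀ x : ℕ, (∃ l ∈ L, x ∈ l) ↔ (1 ≤ x ∧ x ≤ n))

/-- The integers occurring in `L`. -/
def occ (L : Finset (List ℕ)) : Finset ℕ := L.sup fun l => l.toFinset

/-- The rank of `x` among the integers occurring in `L` (the `i`-th smallest gets
rank `i`). -/
def rankIn (L : Finset (List ℕ)) (x : ℕ) : ℕ := ((occ L).filter (· ≤ x)).card

/-- Standardization: replace the `i`-th smallest integer occurring in `L` by `i`. -/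
def stdF (L : Finset (List ℕ)) : Finset (List ℕ) := L.image (List.map (rankIn L))

/-- The free `ℚ`-vector space with basis the finite sets of lists of integers
(containing `BWSym`, whose basis `Φ^Π` is indexed by set partitions into lists). -/
abbrev BW : Type := (Finset (List ℕ)) →₀ ℚ

/-- The coproduct `Δ(Φ^Π) = ∑ Φ^{std(Π′)} ⊗ Φ^{std(Π″)}` summed over ordered pairs
of complementary subsets `Π′ ⊔ Π″ = Π` of the set of lists of `Π`. -/
noncomputable def deltaBW : BW →ₗ[ℚ] TensorProduct ℚ BW BW :=
  Finsupp.lift (TensorProduct ℚ BW BW) ℚ (Finset (List ℕ)) fun L =>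
    ∑ S ∈ L.powerset,
      Finsupp.single (stdF S) (1 : ℚ) ⊗ₜ[ℚ] Finsupp.single (stdF (L \ S)) (1 : ℚ)

open TensorProduct

lemma mem_occ {L : Finset (List ℕ)} {x : ℕ} : x ∈ occ L ↔ ∃ l ∈ L, x ∈ l := by
  simp [occ, Finset.mem_sup, List.mem_toFinset]

lemma occ_mono {A B : Finset (List ℕ)} (h : A ⊆ B) : occ A ⊆ occ B := by
  intro x hx
  rcases mem_occ.1 hx with ⟨l, hl, hxl⟩
  exact mem_occ.2 ⟨l, h hl, hxl⟩

lemma rankIn_lt {S : Finset (List ℕ)} {x y : ℕ} (hy : y ∈ occ S) (hxy : x < y) :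
    rankIn S x < rankIn S y := by
  unfold rankIn
  apply Finset.card_lt_card
  refine ⟨fun z hz => ?_, fun h => ?_⟩
  · simp only [Finset.mem_filter] at *
    exact ⟨hz.1, hz.2.trans hxy.le⟩
  · have := h (Finset.mem_filter.2 ⟨hy, le_refl y⟩)
    simp only [Finset.mem_filter] at this
    omega

lemma rankIn_le_iff {S : Finset (List ℕ)} {x y : ℕ} (hx : x ∈ occ S) (hy : y ∈ occ S) :
    rankIn S x ≤ rankIn S y ↔ x ≤ y := by
  constructor
  · intro h
    by_contra hxy
    exact absurd h (not_le.2 (rankIn_lt hx (not_le.1 hxy)))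
  · intro h
    rcases h.lt_or_eq with h | h
    · exact (rankIn_lt hy h).le
    · simp [h]

lemma rankIn_injOn {S : Finset (List ℕ)} {x y : ℕ} (hx : x ∈ occ S) (hy : y ∈ occ S)
    (h : rankIn S x = rankIn S y) : x = y :=
  le_antisymm ((rankIn_le_iff hx hy).1 h.le) ((rankIn_le_iff hy hx).1 h.ge)

lemma occ_image (A : Finset (List ℕ)) (g : ℕ → ℕ) :
    occ (A.image (List.map g)) = (occ A).image g := by
  ext x
  simp only [mem_occ, Finset.mem_image]
  aesop

lemma listmap_inj {M : Finset (List ℕ)} :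
    ∀ l l' : List ℕ, (∀ x ∈ l, x ∈ occ M) → (∀ x ∈ l', x ∈ occ M) →
      l.map (rankIn M) = l'.map (rankIn M) → l = l' := by
  intro l
  induction l with
  | nil => intro l' _ _ h; cases l' <;> simp_all
  | cons a l ih =>
    intro l' h1 h2 h
    cases l' with
    | nil => simp at h
    | cons b l'' =>
      simp only [List.map_cons, List.cons.injEq] at h
      have hab : a = b :=
        rankIn_injOn (h1 a (by simp)) (h2 b (by simp)) h.1
      have := ih l'' (fun x hx => h1 x (by simp [hx])) (fun x hx => h2 x (by simp [hx])) h.2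
      simp [hab, this]

lemma entries_mem {M : Finset (List ℕ)} {l : List ℕ} (hl : l ∈ M) :
    ∀ x ∈ l, x ∈ occ M := fun x hx => mem_occ.2 ⟨l, hl, hx⟩

lemma fimage_injOn {M : Finset (List ℕ)} {A B : Finset (List ℕ)}
    (hA : A ⊆ M) (hB : B ⊆ M)
    (h : A.image (List.map (rankIn M)) = B.image (List.map (rankIn M))) : A = B := by
  ext l
  constructor
  · intro hl
    have : l.map (rankIn M) ∈ B.image (List.map (rankIn M)) := by
      rw [← h]; exact Finset.mem_image_of_mem _ hl
    rcases Finset.mem_image.1 this with ⟨b, hb, hbl⟩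
    rwa [listmap_inj b l (entries_mem (hB hb)) (entries_mem (hA hl)) hbl] at hb
  · intro hl
    have : l.map (rankIn M) ∈ A.image (List.map (rankIn M)) := by
      rw [h]; exact Finset.mem_image_of_mem _ hl
    rcases Finset.mem_image.1 this with ⟨b, hb, hbl⟩
    rwa [listmap_inj b l (entries_mem (hA hb)) (entries_mem (hB hl)) hbl] at hb

lemma image_sdiff' {M A : Finset (List ℕ)} (hA : A ⊆ M) :
    M.image (List.map (rankIn M)) \ A.image (List.map (rankIn M)) =
      (M \ A).image (List.map (rankIn M)) := by
  ext t
  simp only [Finset.mem_sdiff, Finset.mem_image]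
  constructor
  · rintro ⟨⟨m, hm, rfl⟩, hnot⟩
    refine ⟨m, ⟨hm, fun hmA => hnot ⟨m, hmA, rfl⟩⟩, rfl⟩
  · rintro ⟨m, hm, rfl⟩
    obtain ⟨hmM, hmA⟩ := hm
    refine ⟨⟨m, hmM, rfl⟩, ?_⟩
    rintro ⟨a, haA, hal⟩
    exact hmA (by rwa [listmap_inj a m (entries_mem (hA haA)) (entries_mem hmM) hal] at haA)

lemma powerset_stdF (M : Finset (List ℕ)) :
    (stdF M).powerset = M.powerset.image (fun A => A.image (List.map (rankIn M))) := by
  ext T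
  simp only [Finset.mem_powerset, Finset.mem_image, stdF]
  constructor
  · intro hT
    refine ⟨M.filter (fun a => a.map (rankIn M) ∈ T), Finset.filter_subset _ _, ?_⟩
    ext t
    simp only [Finset.mem_image, Finset.mem_filter]
    constructor
    · rintro ⟨a, ⟨_, ha⟩, rfl⟩; exact ha
    · intro ht
      rcases Finset.mem_image.1 (hT ht) with ⟨m, hm, rfl⟩
      exact ⟨m, ⟨hm, ht⟩, rfl⟩
  · rintro ⟨A, hA, rfl⟩
    exact Finset.image_subset_image hA

lemma rank_image {M A : Finset (List ℕ)} (hA : A ⊆ M) {x : ℕ} (hx : x ∈ occ A) :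
    rankIn (A.image (List.map (rankIn M))) (rankIn M x) = rankIn A x := by
  have hsub : occ A ⊆ occ M := occ_mono hA
  have hfilter : ((occ A).image (rankIn M)).filter (· ≤ rankIn M x) =
      ((occ A).filter (· ≤ x)).image (rankIn M) := by
    ext z
    simp only [Finset.mem_filter, Finset.mem_image]
    constructor
    · rintro ⟨⟨y, hy, rfl⟩, hle⟩
      exact ⟨y, ⟨hy, (rankIn_le_iff (hsub hy) (hsub hx)).1 hle⟩, rfl⟩
    · rintro ⟨y, ⟨hy, hle⟩, rfl⟩
      exact ⟨⟨y, hy, rfl⟩, (rankIn_le_iff (hsub hy) (hsub hx)).2 hle⟩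
  show ((occ (A.image (List.map (rankIn M)))).filter (· ≤ rankIn M x)).card
      = ((occ A).filter (· ≤ x)).card
  rw [occ_image, hfilter, Finset.card_image_of_injOn]
  intro a ha b hb hab
  exact rankIn_injOn (hsub (Finset.mem_filter.1 ha).1) (hsub (Finset.mem_filter.1 hb).1) hab

lemma std_image {M A : Finset (List ℕ)} (hA : A ⊆ M) :
    stdF (A.image (List.map (rankIn M))) = stdF A := by
  unfold stdF
  rw [Finset.image_image]
  apply Finset.image_congr
  intro l hl
  simp only [Function.comp_apply, List.map_map]
  apply List.map_congr_left
  intro x hx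
  exact rank_image hA (mem_occ.2 ⟨l, hl, hx⟩)


open TensorProduct

local notation "e" => fun T => Finsupp.single T (1 : ℚ)

lemma sum_powerset_std {α : Type*} [AddCommMonoid α] (M : Finset (List ℕ))
    (F : Finset (List ℕ) → Finset (List ℕ) → α) :
    ∑ T ∈ (stdF M).powerset, F (stdF T) (stdF (stdF M \ T)) =
      ∑ A ∈ M.powerset, F (stdF A) (stdF (M \ A)) := by
  rw [powerset_stdF, Finset.sum_image ?inj]
  case inj =>
    intro A hA B hB h
    exact fimage_injOn (Finset.mem_powerset.1 hA) (Finset.mem_powerset.1 hB) h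
  apply Finset.sum_congr rfl
  intro A hA
  have h1 : stdF (A.image (List.map (rankIn M))) = stdF A :=
    std_image (Finset.mem_powerset.1 hA)
  have h2 : stdF M \ A.image (List.map (rankIn M)) = (M \ A).image (List.map (rankIn M)) :=
    image_sdiff' (Finset.mem_powerset.1 hA)
  rw [h1, h2, std_image Finset.sdiff_subset]

lemma hdelta (M : Finset (List ℕ)) : deltaBW (Finsupp.single M 1) =
    ∑ S ∈ M.powerset,
      Finsupp.single (stdF S) (1 : ℚ) ⊗ₜ[ℚ] Finsupp.single (stdF (M \ S)) (1 : ℚ) := by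
  simp [deltaBW, Finsupp.lift_apply, Finsupp.sum_single_index]

set_option maxHeartbeats 1000000 in
set_option synthInstance.maxHeartbeats 1000000 in
/-- On the basis elements `Φ^Π` indexed by set partitions into lists `Π`, the
coproduct of `BWSym` is coassociative and cocommutative. -/
theorem deltaBW_coassoc_cocomm (n : ℕ) (L : Finset (List ℕ)) (hL : IsSPLn n L) :
    (TensorProduct.assoc ℚ BW BW BW)
        ((LinearMap.rTensor BW deltaBW) (deltaBW (Finsupp.single L (1 : ℚ)))) =
      (LinearMap.lTensor BW deltaBW) (deltaBW (Finsupp.single L (1 : ℚ))) ∧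
    (TensorProduct.comm ℚ BW BW) (deltaBW (Finsupp.single L (1 : ℚ))) =
      deltaBW (Finsupp.single L (1 : ℚ)) := by
  constructor
  · rw [hdelta]
    rw [map_sum, map_sum, map_sum]
    simp only [LinearMap.rTensor_tmul, LinearMap.lTensor_tmul, hdelta,
      TensorProduct.sum_tmul, TensorProduct.tmul_sum, map_sum, TensorProduct.assoc_tmul]
    -- LHS : ∑ S ∈ L.powerset, ∑ T ∈ (stdF S).powerset,
    --   e (stdF T) ⊗ₜ (e (stdF (stdF S \ T)) ⊗ₜ e (stdF (L \ S)))
    have lhs_eq : ∀ S ∈ L.powerset,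
        (∑ T ∈ (stdF S).powerset,
          Finsupp.single (stdF T) (1:ℚ) ⊗ₜ[ℚ]
            (Finsupp.single (stdF (stdF S \ T)) (1:ℚ) ⊗ₜ[ℚ]
              Finsupp.single (stdF (L \ S)) (1:ℚ))) =
        ∑ A ∈ S.powerset,
          Finsupp.single (stdF A) (1:ℚ) ⊗ₜ[ℚ]
            (Finsupp.single (stdF (S \ A)) (1:ℚ) ⊗ₜ[ℚ]
              Finsupp.single (stdF (L \ S)) (1:ℚ)) := by
      intro S _
      exact sum_powerset_std S (fun X Y =>
        Finsupp.single X (1:ℚ) ⊗ₜ[ℚ]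
          (Finsupp.single Y (1:ℚ) ⊗ₜ[ℚ] Finsupp.single (stdF (L \ S)) (1:ℚ)))
    have rhs_eq : ∀ S ∈ L.powerset,
        (∑ T ∈ (stdF (L \ S)).powerset,
          Finsupp.single (stdF S) (1:ℚ) ⊗ₜ[ℚ]
            (Finsupp.single (stdF T) (1:ℚ) ⊗ₜ[ℚ]
              Finsupp.single (stdF (stdF (L \ S) \ T)) (1:ℚ))) =
        ∑ B ∈ (L \ S).powerset,
          Finsupp.single (stdF S) (1:ℚ) ⊗ₜ[ℚ]
            (Finsupp.single (stdF B) (1:ℚ) ⊗ₜ[ℚ]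
              Finsupp.single (stdF ((L \ S) \ B)) (1:ℚ)) := by
      intro S _
      exact sum_powerset_std (L \ S) (fun X Y =>
        Finsupp.single (stdF S) (1:ℚ) ⊗ₜ[ℚ]
          (Finsupp.single X (1:ℚ) ⊗ₜ[ℚ] Finsupp.single Y (1:ℚ)))
    rw [Finset.sum_congr rfl lhs_eq, Finset.sum_congr rfl rhs_eq]
    rw [Finset.sum_sigma', Finset.sum_sigma']
    apply Finset.sum_nbij' (i := fun p => ⟨p.2, p.1 \ p.2⟩) (j := fun p => ⟨p.1 ∪ p.2, p.1⟩)
    · rintro ⟨S, A⟩ hp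
      rw [Finset.mem_sigma] at hp ⊢
      obtain ⟨hS, hA⟩ := hp
      rw [Finset.mem_powerset] at hS hA ⊢
      constructor
      · exact hA.trans hS
      · rw [Finset.mem_powerset]
        exact fun x hx => by
          rw [Finset.mem_sdiff] at hx ⊢
          exact ⟨hS hx.1, hx.2⟩
    · rintro ⟨S, B⟩ hp
      rw [Finset.mem_sigma] at hp ⊢
      obtain ⟨hS, hB⟩ := hp
      rw [Finset.mem_powerset] at hS hB ⊢
      constructor
      · exact Finset.union_subset hS (hB.trans Finset.sdiff_subset)
      · rw [Finset.mem_powerset]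
        exact Finset.subset_union_left
    · rintro ⟨S, A⟩ hp
      rw [Finset.mem_sigma, Finset.mem_powerset, Finset.mem_powerset] at hp
      have : A ∪ (S \ A) = S := Finset.union_sdiff_of_subset hp.2
      simp [this]
    · rintro ⟨S, B⟩ hp
      rw [Finset.mem_sigma, Finset.mem_powerset, Finset.mem_powerset] at hp
      have hdisj : Disjoint S B := by
        refine Finset.disjoint_left.2 fun x hxS hxB => ?_
        exact (Finset.mem_sdiff.1 (hp.2 hxB)).2 hxS
      have : (S ∪ B) \ S = B := Finset.union_sdiff_cancel_left hdisj
      simp [this]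
    · rintro ⟨S, A⟩ hp
      rw [Finset.mem_sigma, Finset.mem_powerset, Finset.mem_powerset] at hp
      have key : (L \ A) \ (S \ A) = L \ S := by
        ext x
        simp only [Finset.mem_sdiff]
        constructor
        · rintro ⟨⟨hxL, hxA⟩, h2⟩
          refine ⟨hxL, fun hxS => h2 ⟨hxS, hxA⟩⟩
        · rintro ⟨hxL, hxS⟩
          exact ⟨⟨hxL, fun hxA => hxS (hp.2 hxA)⟩, fun h => hxS h.1⟩
      simp [key]
  · rw [hdelta]
    rw [show ⇑(TensorProduct.comm ℚ BW BW) = ⇑(TensorProduct.comm ℚ BW BW).toLinearMap from rfl,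
      map_sum]
    simp only [LinearEquiv.coe_coe, TensorProduct.comm_tmul]
    apply Finset.sum_nbij' (i := fun S => L \ S) (j := fun S => L \ S)
    · intro S hS
      exact Finset.mem_powerset.2 Finset.sdiff_subset
    · intro S hS
      exact Finset.mem_powerset.2 Finset.sdiff_subset
    · intro S hS
      exact Finset.sdiff_sdiff_eq_self (Finset.mem_powerset.1 hS)
    · intro S hS
      exact Finset.sdiff_sdiff_eq_self (Finset.mem_powerset.1 hS)
    · intro S hS
      rw [Finset.sdiff_sdiff_eq_self (Finset.mem_powerset.1 hS)]
end
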